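/- Let p, q, r, s, ω be real numbers with q ≠ 0, s ≠ 0, ω ≠ 0, and define u(ξ) = −(3r²/(25qsω)) [1 − tanh(rξ/(10sω))]² − (25sω² + 25psω − 6r²)/(25qsω). Then u satisfies the traveling-wave RLW–Burgers ODE (ω + p) u' + q u u' + r u'' + ω s u''' = 0 for all ξ ∈ ℝ. -/

import Mathlib

/-!
Since `tanh' = 1 - tanh ^ 2`, the derivative of `P (tanh (c ξ))` for a polynomial `P` is again of
this form, with `P` replaced by `c (1 - X ^ 2) P'`. So `u`, `u'`, `u''`, `u'''` are polynomials in
`T = tanh (r ξ / (10 s ω))`, and the ODE reduces to a polynomial identity in `T`.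
-/

open Real Polynomial

theorem Real.hasDerivAt_tanh (x : ℝ) : HasDerivAt tanh (1 - tanh x ^ 2) x := by
  have h := (hasDerivAt_sinh x).div (hasDerivAt_cosh x) (cosh_pos x).ne'
  rw [show sinh / cosh = tanh from funext fun y => (tanh_eq_sinh_div_cosh y).symm] at h
  refine h.congr_deriv ?_
  rw [tanh_eq_sinh_div_cosh]
  field_simp

noncomputable def tanhDerivPoly (c : ℝ) (P : ℝ[X]) : ℝ[X] :=
  C c * (1 - X ^ 2) * derivative P

theorem hasDerivAt_eval_tanh (c : ℝ) (P : ℝ[X]) (x : ℝ) :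
    HasDerivAt (fun y => P.eval (tanh (c * y))) ((tanhDerivPoly c P).eval (tanh (c * x))) x := by
  have h := (P.hasDerivAt (tanh (c * x))).comp x
    ((hasDerivAt_tanh (c * x)).comp x ((hasDerivAt_id x).const_mul c))
  refine h.congr_deriv ?_
  simp only [tanhDerivPoly, eval_mul, eval_sub, eval_C, eval_one, eval_pow, eval_X]
  ring

theorem deriv_eval_tanh (c : ℝ) (P : ℝ[X]) :
    deriv (fun y => P.eval (tanh (c * y))) = fun y => (tanhDerivPoly c P).eval (tanh (c * y)) :=
  funext fun x => (hasDerivAt_eval_tanh c P x).deriv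

theorem rlw_burgers_tanh_solution
    (p q r s omega : ℝ) (hq : q ≠ 0) (hs : s ≠ 0) (homega : omega ≠ 0)
    (u : ℝ → ℝ)
    (hu : ∀ ξ, u ξ =
      -(3 * r ^ 2 / (25 * q * s * omega)) *
          (1 - Real.tanh (r * ξ / (10 * s * omega))) ^ 2
        - (25 * s * omega ^ 2 + 25 * p * s * omega - 6 * r ^ 2)
            / (25 * q * s * omega))
    (ξ : ℝ) :
    (omega + p) * deriv u ξ + q * u ξ * deriv u ξ + r * deriv (deriv u) ξ
      + omega * s * deriv (deriv (deriv u)) ξ = 0 := by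
  set A := -(3 * r ^ 2 / (25 * q * s * omega))
  set B := -((25 * s * omega ^ 2 + 25 * p * s * omega - 6 * r ^ 2) / (25 * q * s * omega))
  set c := r / (10 * s * omega)
  have hu_eval : u = fun y => (C (A + B) - C (2 * A) * X + C A * X ^ 2).eval (tanh (c * y)) := by
    funext y
    simp only [hu, eval_add, eval_sub, eval_mul, eval_C, eval_pow, eval_X, c, div_mul_eq_mul_div]
    ring
  simp only [hu_eval, deriv_eval_tanh, tanhDerivPoly]
  simp only [derivative_add, derivative_sub, derivative_mul, derivative_C, derivative_X,
    derivative_one, derivative_zero, derivative_X_pow_succ, pow_one, eval_add, eval_sub, eval_mul, eval_C, eval_X,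
    eval_one, eval_pow, eval_zero]
  generalize tanh (c * ξ) = t
  simp only [A, B, c]
  field_simp
  ring
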